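/- Landweber iteration monotonicity estimate: Let X, Y be real Hilbert spaces, x* ∈ X with F x* = 0, and suppose the iterate satisfies x_{n+1} = x_n − μ A* (F x_n), where A = DF x_n is a bounded linear operator with ‖μ A A*‖ ≤ 1 (i.e. μ‖A‖² ≤ 1), and the tangential cone condition ‖F x_n − (A)(x_n − x*)‖ ≤ ρ ‖F x_n‖ holds with ρ < 1/2. Then ‖x_{n+1} − x*‖² ≤ ‖x_n − x*‖² − μ(1 − 2ρ)‖F x_n‖². -/
import Mathlib
open InnerProductSpace


/-- Landweber iteration monotonicity estimate. -/
theorem stmt1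
    {X Y : Type*} [NormedAddCommGroup X] [InnerProductSpace ℝ X] [CompleteSpace X]
    [NormedAddCommGroup Y] [InnerProductSpace ℝ Y] [CompleteSpace Y]
    (F : X → Y) (xs xn xnext : X) (A : X →L[ℝ] Y) (μ ρ : ℝ)
    (hFxs : F xs = 0)
    (hμ : 0 < μ) (hμA : μ * ‖A‖ ^ 2 ≤ 1)
    (hρ0 : 0 ≤ ρ) (hρ : ρ < 1 / 2)
    (hcone : ‖F xn - A (xn - xs)‖ ≤ ρ * ‖F xn‖)
    (hiter : xnext = xn - μ • (ContinuousLinearMap.adjoint A) (F xn)) :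
    ‖xnext - xs‖ ^ 2 ≤ ‖xn - xs‖ ^ 2 - μ * (1 - 2 * ρ) * ‖F xn‖ ^ 2 := by
  set e := xn - xs with he
  set y := F xn with hy
  set v := (ContinuousLinearMap.adjoint A) y with hv
  have hxe : xnext - xs = e - μ • v := by
    rw [hiter, he]; abel
  have hexp : ‖e - μ • v‖ ^ 2 = ‖e‖ ^ 2 - 2 * (μ * ⟪e, v⟫_ℝ) + μ ^ 2 * ‖v‖ ^ 2 := by
    rw [norm_sub_sq_real, real_inner_smul_right, norm_smul]
    simp [mul_pow, abs_of_pos hμ]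
  have hadj : ⟪e, v⟫_ℝ = ⟪A e, y⟫_ℝ := ContinuousLinearMap.adjoint_inner_right A e y
  have hinner : (1 - ρ) * ‖y‖ ^ 2 ≤ ⟪e, v⟫_ℝ := by
    have h1 : ⟪A e, y⟫_ℝ = ‖y‖ ^ 2 - ⟪y - A e, y⟫_ℝ := by
      rw [inner_sub_left, real_inner_self_eq_norm_sq]; ring
    have h2 : ⟪y - A e, y⟫_ℝ ≤ ρ * ‖y‖ * ‖y‖ := by
      calc ⟪y - A e, y⟫_ℝ ≤ ‖y - A e‖ * ‖y‖ := real_inner_le_norm _ _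
        _ ≤ ρ * ‖y‖ * ‖y‖ := by
            apply mul_le_mul_of_nonneg_right _ (norm_nonneg _)
            simpa using hcone
    rw [hadj, h1]; nlinarith [norm_nonneg y]
  have hAnorm : ‖v‖ ≤ ‖A‖ * ‖y‖ := by
    calc ‖v‖ ≤ ‖ContinuousLinearMap.adjoint A‖ * ‖y‖ := (ContinuousLinearMap.adjoint A).le_opNorm y
      _ = ‖A‖ * ‖y‖ := by rw [LinearIsometryEquiv.norm_map ContinuousLinearMap.adjoint A]
  have hv2 : μ ^ 2 * ‖v‖ ^ 2 ≤ μ * ‖y‖ ^ 2 := by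
    have h : ‖v‖ ^ 2 ≤ ‖A‖ ^ 2 * ‖y‖ ^ 2 := by
      nlinarith [norm_nonneg v, norm_nonneg A, norm_nonneg y]
    calc μ ^ 2 * ‖v‖ ^ 2 ≤ μ * (μ * ‖A‖ ^ 2) * ‖y‖ ^ 2 := by nlinarith
      _ ≤ μ * 1 * ‖y‖ ^ 2 := by
          have := mul_le_mul_of_nonneg_left hμA (mul_nonneg hμ.le (sq_nonneg ‖y‖))
          nlinarith
      _ = μ * ‖y‖ ^ 2 := by ring
  rw [hxe, hexp]
  nlinarith [sq_nonneg ‖y‖]
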